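/- arXiv:1512.06537 — 3 statements merged into one kernel-verified Lean document; each statement's English description precedes it below -/
import Mathlib

section
/- Let H be a real Hilbert space, A a bounded, symmetric, nonnegative linear operator on H, and β > 0. Then there exists a constant D > 0 such that for all w, v ∈ H, ‖‖A^{1/2}w‖^β A w - ‖A^{1/2}v‖^β A v‖ ≤ D · max(‖A^{1/2}v‖, ‖A^{1/2}w‖)^β · ‖w - v‖. -/
open RealInnerProductSpace

lemma key_scalar (β : ℝ) (hβ : 0 < β) {a b : ℝ} (hb : 0 ≤ b) (hba : b ≤ a) :
    (a ^ β - b ^ β) * b ≤ β * a ^ β * (a - b) := by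
  have ha : 0 ≤ a := hb.trans hba
  rcases eq_or_lt_of_le hb with hb0 | hb0
  · simp only [← hb0, mul_zero]
    have : (0:ℝ) ≤ β * a ^ β * a :=
      mul_nonneg (mul_nonneg hβ.le (Real.rpow_nonneg ha β)) ha
    linarith
  rcases eq_or_lt_of_le hba with hab | hab
  · simp [hab]
  have ha0 : 0 < a := hb0.trans hab
  obtain ⟨c, hc, hceq⟩ := exists_hasDerivAt_eq_slope (fun x => x ^ β)
    (fun x => β * x ^ (β - 1)) hab
    (by
      apply ContinuousOn.rpow_const continuousOn_id
      intro x hx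
      exact Or.inl (ne_of_gt (lt_of_lt_of_le hb0 hx.1)))
    (fun x hx => Real.hasDerivAt_rpow_const (Or.inl (ne_of_gt (hb0.trans hx.1))))
  have hc0 : 0 < c := hb0.trans hc.1
  have heq : a ^ β - b ^ β = β * c ^ (β - 1) * (a - b) := by
    have h := hceq
    rw [eq_div_iff (by linarith : a - b ≠ 0)] at h
    linarith
  have hbound : c ^ (β - 1) * b ≤ a ^ β := by
    rcases le_or_gt 1 β with h1 | h1
    · have h2 : c ^ (β - 1) ≤ a ^ (β - 1) :=
        Real.rpow_le_rpow hc0.le hc.2.le (by linarith)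
      calc c ^ (β - 1) * b ≤ a ^ (β - 1) * a := by
            apply mul_le_mul h2 hba hb (Real.rpow_nonneg ha _)
        _ = a ^ β := by
            rw [← Real.rpow_add_one (ne_of_gt ha0)]; ring_nf
    · have h2 : c ^ (β - 1) ≤ b ^ (β - 1) :=
        Real.rpow_le_rpow_of_nonpos hb0 hc.1.le (by linarith)
      calc c ^ (β - 1) * b ≤ b ^ (β - 1) * b := by
            apply mul_le_mul_of_nonneg_right h2 hb
        _ = b ^ β := by rw [← Real.rpow_add_one (ne_of_gt hb0)]; ring_nf
        _ ≤ a ^ β := Real.rpow_le_rpow hb hba hβ.le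
  have hab' : 0 < a - b := by linarith
  calc (a ^ β - b ^ β) * b = β * (c ^ (β - 1) * b) * (a - b) := by rw [heq]; ring
    _ ≤ β * a ^ β * (a - b) := by
        apply mul_le_mul_of_nonneg_right _ hab'.le
        exact mul_le_mul_of_nonneg_left hbound hβ.le

lemma key_vec {H : Type*} [NormedAddCommGroup H] [NormedSpace ℝ H]
    (β : ℝ) (hβ : 0 < β) (x y : H) (h : ‖y‖ ≤ ‖x‖) :
    ‖‖x‖ ^ β • x - ‖y‖ ^ β • y‖ ≤ (1 + β) * ‖x‖ ^ β * ‖x - y‖ := by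
  have hdec : ‖x‖ ^ β • x - ‖y‖ ^ β • y
      = ‖x‖ ^ β • (x - y) + (‖x‖ ^ β - ‖y‖ ^ β) • y := by
    rw [smul_sub, sub_smul]; abel
  have hnn : (0:ℝ) ≤ ‖x‖ ^ β - ‖y‖ ^ β := by
    have := Real.rpow_le_rpow (norm_nonneg y) h hβ.le
    linarith
  have h1 : ‖‖x‖ ^ β • (x - y)‖ ≤ ‖x‖ ^ β * ‖x - y‖ := by
    rw [norm_smul, Real.norm_eq_abs, abs_of_nonneg (Real.rpow_nonneg (norm_nonneg x) _)]
  have h2 : ‖(‖x‖ ^ β - ‖y‖ ^ β) • y‖ ≤ β * ‖x‖ ^ β * ‖x - y‖ := by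
    rw [norm_smul, Real.norm_eq_abs, abs_of_nonneg hnn]
    calc (‖x‖ ^ β - ‖y‖ ^ β) * ‖y‖ ≤ β * ‖x‖ ^ β * (‖x‖ - ‖y‖) :=
          key_scalar β hβ (norm_nonneg y) h
      _ ≤ β * ‖x‖ ^ β * ‖x - y‖ := by
          apply mul_le_mul_of_nonneg_left _ (by positivity)
          calc ‖x‖ - ‖y‖ ≤ |‖x‖ - ‖y‖| := le_abs_self _
            _ ≤ ‖x - y‖ := abs_norm_sub_norm_le x y
  calc ‖‖x‖ ^ β • x - ‖y‖ ^ β • y‖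
      ≤ ‖‖x‖ ^ β • (x - y)‖ + ‖(‖x‖ ^ β - ‖y‖ ^ β) • y‖ := by
        rw [hdec]; exact norm_add_le _ _
    _ ≤ ‖x‖ ^ β * ‖x - y‖ + β * ‖x‖ ^ β * ‖x - y‖ := add_le_add h1 h2
    _ = (1 + β) * ‖x‖ ^ β * ‖x - y‖ := by ring

theorem stmt_7 {H : Type*} [NormedAddCommGroup H] [InnerProductSpace ℝ H]
    [CompleteSpace H]
    (β : ℝ) (hβ : 0 < β)
    (A S : H →L[ℝ] H)
    (hAsym : ∀ x y : H, ⟪A x, y⟫ = ⟪x, A y⟫)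
    (hAnonneg : ∀ x : H, 0 ≤ ⟪A x, x⟫)
    (hSsym : ∀ x y : H, ⟪S x, y⟫ = ⟪x, S y⟫)
    (hSnonneg : ∀ x : H, 0 ≤ ⟪S x, x⟫)
    (hS : ∀ x : H, S (S x) = A x) :
    ∃ D > (0 : ℝ), ∀ w v : H,
      ‖‖S w‖ ^ β • A w - ‖S v‖ ^ β • A v‖ ≤ D * max ‖S v‖ ‖S w‖ ^ β * ‖w - v‖ := by
  refine ⟨(1 + β) * (‖S‖ + 1) ^ 2, by positivity, fun w v => ?_⟩
  have hrw : ‖S w‖ ^ β • A w - ‖S v‖ ^ β • A v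
      = S (‖S w‖ ^ β • S w - ‖S v‖ ^ β • S v) := by
    rw [map_sub, map_smul, map_smul, hS, hS]
  have hSnorm : 0 ≤ ‖S‖ := norm_nonneg _
  have hSwv : ‖S w - S v‖ ≤ ‖S‖ * ‖w - v‖ := by
    rw [← map_sub]; exact S.le_opNorm _
  have hMnn : 0 ≤ max ‖S v‖ ‖S w‖ := le_max_of_le_left (norm_nonneg _)
  have hinner : ‖‖S w‖ ^ β • S w - ‖S v‖ ^ β • S v‖
      ≤ (1 + β) * max ‖S v‖ ‖S w‖ ^ β * ‖S w - S v‖ := by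
    rcases le_total ‖S v‖ ‖S w‖ with h | h
    · rw [max_eq_right h]
      exact key_vec β hβ (S w) (S v) h
    · rw [max_eq_left h, show ‖S w‖ ^ β • S w - ‖S v‖ ^ β • S v
        = -(‖S v‖ ^ β • S v - ‖S w‖ ^ β • S w) by abel, norm_neg,
        show ‖S w - S v‖ = ‖S v - S w‖ from (norm_sub_rev _ _)]
      exact key_vec β hβ (S v) (S w) h
  calc ‖‖S w‖ ^ β • A w - ‖S v‖ ^ β • A v‖
      = ‖S (‖S w‖ ^ β • S w - ‖S v‖ ^ β • S v)‖ := by rw [hrw]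
    _ ≤ ‖S‖ * ‖‖S w‖ ^ β • S w - ‖S v‖ ^ β • S v‖ := S.le_opNorm _
    _ ≤ ‖S‖ * ((1 + β) * max ‖S v‖ ‖S w‖ ^ β * (‖S‖ * ‖w - v‖)) := by
        apply mul_le_mul_of_nonneg_left _ hSnorm
        calc ‖‖S w‖ ^ β • S w - ‖S v‖ ^ β • S v‖
            ≤ (1 + β) * max ‖S v‖ ‖S w‖ ^ β * ‖S w - S v‖ := hinner
          _ ≤ (1 + β) * max ‖S v‖ ‖S w‖ ^ β * (‖S‖ * ‖w - v‖) := by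
              apply mul_le_mul_of_nonneg_left hSwv (by positivity)
    _ ≤ (1 + β) * (‖S‖ + 1) ^ 2 * max ‖S v‖ ‖S w‖ ^ β * ‖w - v‖ := by
        have h1 : 0 ≤ max ‖S v‖ ‖S w‖ ^ β := Real.rpow_nonneg hMnn _
        have h2 : 0 ≤ ‖w - v‖ := norm_nonneg _
        nlinarith [mul_nonneg h1 h2, sq_nonneg ‖S‖, mul_nonneg (mul_nonneg h1 h2) hSnorm]
end

section
/- Let J be an interval, l > 0, and v : J → H continuous such that t ↦ ‖v(t)‖^l v(t) is continuously differentiable on J. Then t ↦ ‖v(t)‖^(l+2) is continuously differentiable on J and for all t ∈ J, ⟨(d/dt)(‖v(t)‖^l v(t)), v(t)⟩ = (d/dt)[((l+1)/(l+2)) ‖v(t)‖^(l+2)]. -/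
/-!
Write `ψ = ‖v‖ ^ l • v`, so that `‖ψ‖ = ‖v‖ ^ (l + 1)` and `‖v‖ ^ (l + 2) = ‖ψ‖ ^ p` with
`p = (l + 2) / (l + 1) > 1`. Since `x ↦ ‖x‖ ^ p` is differentiable on a real inner product space
for `p > 1` (also at `0`), the chain rule gives the derivative `p ‖ψ‖ ^ (p - 2) ⟪ψ, ψ'⟫`, and the
powers of `‖v‖` in this expression cancel to leave `p ⟪v, ψ'⟫`.
-/

open RealInnerProductSpace

section

variable {E : Type*} [NormedAddCommGroup E] [InnerProductSpace ℝ E]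

theorem HasDerivWithinAt.norm_rpow {f : ℝ → E} {f' : E} {s : Set ℝ} {t p : ℝ}
    (hf : HasDerivWithinAt f f' s t) (hp : 1 < p) :
    HasDerivWithinAt (fun x => ‖f x‖ ^ p) (p * ‖f t‖ ^ (p - 2) * ⟪f t, f'⟫) s t := by
  refine ((hasFDerivAt_norm_rpow (f t) hp).comp_hasDerivWithinAt t hf).congr_deriv ?_
  simp [mul_assoc]

theorem norm_rpow_smul_self (x : E) {l : ℝ} (hl : l + 1 ≠ 0) :
    ‖‖x‖ ^ l • x‖ = ‖x‖ ^ (l + 1) := by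
  rw [norm_smul, Real.norm_of_nonneg (by positivity), Real.rpow_add_one' (norm_nonneg x) hl]

theorem norm_rpow_add_two_eq {l : ℝ} (hl : l + 1 ≠ 0) (x : E) :
    ‖x‖ ^ (l + 2) = ‖‖x‖ ^ l • x‖ ^ ((l + 2) / (l + 1)) := by
  rw [norm_rpow_smul_self x hl, ← Real.rpow_mul (norm_nonneg x), mul_div_cancel₀ _ hl]

theorem norm_rpow_smul_self_rpow_mul_inner {l : ℝ} (hl : 0 < l) (x y : E) :
    ‖‖x‖ ^ l • x‖ ^ ((l + 2) / (l + 1) - 2) * ⟪‖x‖ ^ l • x, y⟫ = ⟪x, y⟫ := by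
  rcases eq_or_ne x 0 with rfl | hx
  · simp
  have hl1 : l + 1 ≠ 0 := by linarith
  have hexp : (l + 1) * ((l + 2) / (l + 1) - 2) = -l := by field_simp; ring
  rw [norm_rpow_smul_self x hl1, ← Real.rpow_mul (norm_nonneg x), hexp, real_inner_smul_left,
    Real.rpow_neg (norm_nonneg x), inv_mul_cancel_left₀ (by positivity)]

end

theorem stmt_9_general {H : Type*} [NormedAddCommGroup H] [InnerProductSpace ℝ H]
    (J : Set ℝ) (l : ℝ) (hl : 0 < l)
    (v : ℝ → H) (hv : ContinuousOn v J)
    (ψ' : ℝ → H)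
    (hψ : ∀ t ∈ J, HasDerivWithinAt (fun t => ‖v t‖ ^ l • v t) (ψ' t) J t)
    (hψ'c : ContinuousOn ψ' J) :
    ∃ E' : ℝ → ℝ, ContinuousOn E' J ∧
      (∀ t ∈ J, HasDerivWithinAt (fun t => ‖v t‖ ^ (l + 2)) (E' t) J t) ∧
      ∀ t ∈ J, ⟪ψ' t, v t⟫ = ((l + 1) / (l + 2)) * E' t := by
  have hl1 : l + 1 ≠ 0 := by linarith
  have hp : 1 < (l + 2) / (l + 1) := by rw [one_lt_div (by linarith)]; linarith
  refine ⟨fun t => (l + 2) / (l + 1) * ⟪ψ' t, v t⟫, continuousOn_const.mul (hψ'c.inner hv),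
    fun t ht => ?_, fun t _ => by field_simp⟩
  have hE := (hψ t ht).norm_rpow hp
  rw [mul_assoc, norm_rpow_smul_self_rpow_mul_inner hl, real_inner_comm] at hE
  simpa only [← norm_rpow_add_two_eq hl1] using hE

theorem stmt_9 {H : Type*} [NormedAddCommGroup H] [InnerProductSpace ℝ H]
    [FiniteDimensional ℝ H]
    (J : Set ℝ) (hJ : J.OrdConnected) (l : ℝ) (hl : 0 < l)
    (v : ℝ → H) (hv : ContinuousOn v J)
    (ψ' : ℝ → H)
    (hψ : ∀ t ∈ J, HasDerivWithinAt (fun t => ‖v t‖ ^ l • v t) (ψ' t) J t)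
    (hψ'c : ContinuousOn ψ' J) :
    ∃ E' : ℝ → ℝ, ContinuousOn E' J ∧
      (∀ t ∈ J, HasDerivWithinAt (fun t => ‖v t‖ ^ (l + 2)) (E' t) J t) ∧
      ∀ t ∈ J, ⟪ψ' t, v t⟫ = ((l + 1) / (l + 2)) * E' t :=
  stmt_9_general J l hl v hv ψ' hψ hψ'c
end

section
/- Let J be an interval, t₀ ∈ J, l > 0, and v : J → H continuous with t ↦ ‖v(t)‖^l v(t) differentiable at t₀. If v(t₀) = 0, then t ↦ ‖v(t)‖^(l+2) is differentiable at t₀ with derivative 0. -/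
theorem stmt_10 {H : Type*} [NormedAddCommGroup H] [InnerProductSpace ℝ H]
    (l : ℝ) (hl : 0 < l) (t₀ : ℝ) (v : ℝ → H) (hv : ContinuousAt v t₀)
    (hψ : DifferentiableAt ℝ (fun t => ‖v t‖ ^ l • v t) t₀)
    (h0 : v t₀ = 0) :
    HasDerivAt (fun t => ‖v t‖ ^ (l + 2)) 0 t₀ := by
  have h0' : ‖v t₀‖ ^ l • v t₀ = 0 := by simp [h0]
  have hO0 : (fun t => ‖v t‖ ^ l • v t - ‖v t₀‖ ^ l • v t₀) =O[nhds t₀] fun t => t - t₀ :=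
    hψ.hasFDerivAt.isBigO_sub
  rw [h0'] at hO0
  simp only [sub_zero] at hO0
  have hnorm : ∀ t, ‖‖v t‖ ^ l • v t‖ = ‖v t‖ ^ (l + 1) := by
    intro t
    rw [norm_smul, Real.norm_rpow_of_nonneg (norm_nonneg _), norm_norm,
      Real.rpow_add' (norm_nonneg _) (by positivity)]
    simp
  have hO : (fun t => ‖v t‖ ^ (l + 1)) =O[nhds t₀] fun t => t - t₀ := by
    have := hO0.norm_left
    simpa only [hnorm] using this
  have htend : Filter.Tendsto (fun t => ‖v t‖) (nhds t₀) (nhds 0) := by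
    have : Filter.Tendsto (fun t => ‖v t‖) (nhds t₀) (nhds ‖v t₀‖) :=
      (continuous_norm.tendsto _).comp hv
    simpa [h0] using this
  have hlittle : (fun t => ‖v t‖) =o[nhds t₀] (fun _ => (1 : ℝ)) :=
    (Asymptotics.isLittleO_one_iff ℝ).mpr htend
  have hprod : (fun t => ‖v t‖ * ‖v t‖ ^ (l + 1)) =o[nhds t₀] fun t => t - t₀ := by
    have := hlittle.mul_isBigO hO
    simpa using this
  rw [hasDerivAt_iff_isLittleO]
  simp only [h0, norm_zero, smul_zero, sub_zero,
    Real.zero_rpow (by positivity : l + 2 ≠ 0)]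
  have heq : ∀ t, ‖v t‖ ^ (l + 2) = ‖v t‖ * ‖v t‖ ^ (l + 1) := by
    intro t
    rw [show l + 2 = 1 + (l + 1) by ring,
      Real.rpow_add' (norm_nonneg _) (by positivity)]
    simp
  simpa only [heq] using hprod
end
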